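/- Let ω_SF = √(-1) Σ_{i,j} C_{ij} dz_i ∧ dz̄_j and f*ω = √(-1) Σ_{i,j} A_{ij} dy_i ∧ dȳ_j be positive (1,1)-forms on B × ℂ^n where A = C^{-1} = Im Z for a symmetric matrix Z with Im Z > 0 (constant for this computation), and let Θ = Σ dz_i ∧ dy_i. Then (ω_SF + f*ω)^{2n} = c_n Θ^n ∧ Θ̄^n for the appropriate dimensional constant c_n, i.e., the (2n,2n) volume forms agree up to the standard normalization. -/

import Mathlib

/-!
With `ζ_j = ∑ i, C i j • dz_i` and `η_j = ∑ k, A k j • dy_k` the form is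
`ω = I • ∑ j, (ζ_j dz̄_j + η_j dȳ_j)`, and `∑ j, ζ_j η_j = Θ` because `C Aᵀ = 1`. Two-blades commute
and square to zero, and for commuting square-zero elements `(∑ x_i)^m = m! ∏ x_i`; hence both
`ω^(2n)` and `Θ^n Θ̄^n` are multiples of `∏ j, ζ_j dz̄_j η_j dȳ_j`, and `c_n = (2n).choose n`.
-/

open Matrix Finset

section SquareZero

variable {R : Type*} [CommRing R] {ι : Type*}

theorem add_pow_succ_of_sq_eq_zero {x : R} (hx : x ^ 2 = 0) (y : R) (m : ℕ) :
    (x + y) ^ (m + 1) = y ^ (m + 1) + (m + 1) * x * y ^ m := by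
  induction m with
  | zero => simp [add_comm]
  | succ m ih =>
    rw [pow_succ, ih]
    push_cast
    linear_combination (m + 1 : R) * y ^ m * hx

theorem Finset.sum_pow_card_succ_eq_zero_of_sq_eq_zero (s : Finset ι) {x : ι → R}
    (hx : ∀ i ∈ s, x i ^ 2 = 0) : (∑ i ∈ s, x i) ^ (#s + 1) = 0 := by
  classical
  induction s using Finset.induction_on with
  | empty => simp
  | insert a s ha ih =>
    have hs : (∑ i ∈ s, x i) ^ (#s + 1) = 0 := ih fun i hi => hx i (mem_insert_of_mem hi)
    rw [sum_insert ha, card_insert_of_notMem ha,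
      add_pow_succ_of_sq_eq_zero (hx a (mem_insert_self a s)), pow_succ, hs]
    simp

theorem Finset.sum_pow_card_of_sq_eq_zero (s : Finset ι) {x : ι → R}
    (hx : ∀ i ∈ s, x i ^ 2 = 0) : (∑ i ∈ s, x i) ^ #s = (#s).factorial * ∏ i ∈ s, x i := by
  classical
  induction s using Finset.induction_on with
  | empty => simp
  | insert a s ha ih =>
    have hx' : ∀ i ∈ s, x i ^ 2 = 0 := fun i hi => hx i (mem_insert_of_mem hi)
    rw [sum_insert ha, card_insert_of_notMem ha, prod_insert ha,
      add_pow_succ_of_sq_eq_zero (hx a (mem_insert_self a s)),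
      sum_pow_card_succ_eq_zero_of_sq_eq_zero s hx', ih hx', Nat.factorial_succ]
    push_cast
    ring

theorem sum_add_pow_two_mul_card_eq [Fintype ι] (a b θ θ' : ι → R)
    (ha : ∀ i, a i ^ 2 = 0) (hb : ∀ i, b i ^ 2 = 0)
    (hθ : ∀ i, θ i ^ 2 = 0) (hθ' : ∀ i, θ' i ^ 2 = 0) (h : ∀ i, θ i * θ' i = -(a i * b i)) :
    (∑ i, (a i + b i)) ^ (2 * Fintype.card ι) =
      ((-1) ^ Fintype.card ι * (2 * Fintype.card ι).choose (Fintype.card ι)) *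
        ((∑ i, θ i) ^ Fintype.card ι * (∑ i, θ' i) ^ Fintype.card ι) := by
  set c := Fintype.card ι
  have hab : (∑ i, (a i + b i)) ^ (2 * c) = (2 * c).factorial * ((∏ i, a i) * ∏ i, b i) := by
    have := sum_pow_card_of_sq_eq_zero (univ : Finset (ι ⊕ ι)) (x := Sum.elim a b)
      (by rintro (i | i) -; exacts [ha i, hb i])
    simpa [Fintype.sum_sum_type, Fintype.prod_sum_type, sum_add_distrib, two_mul] using this
  have hθθ' : (∑ i, θ i) ^ c * (∑ i, θ' i) ^ c =
      c.factorial * c.factorial * ((-1) ^ c * ((∏ i, a i) * ∏ i, b i)) := by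
    have hθc := sum_pow_card_of_sq_eq_zero univ fun i _ => hθ i
    have hθ'c := sum_pow_card_of_sq_eq_zero univ fun i _ => hθ' i
    rw [card_univ] at hθc hθ'c
    rw [hθc, hθ'c, mul_mul_mul_comm, ← prod_mul_distrib, prod_congr rfl fun i _ => h i, prod_neg,
      prod_mul_distrib, card_univ]
  have hchoose : ((2 * c).factorial : R) = (2 * c).choose c * c.factorial * c.factorial := by
    have := Nat.choose_mul_factorial_mul_factorial (show c ≤ 2 * c by omega)
    rw [show 2 * c - c = c by omega] at this
    exact_mod_cast congrArg (Nat.cast (R := R)) this.symm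
  have hsign : ((-1 : R) ^ c) ^ 2 = 1 := by rw [← pow_mul, pow_mul', neg_one_sq, one_pow]
  rw [hab, hθθ', hchoose]
  linear_combination (-(2 * c).choose c * c.factorial * c.factorial * ((∏ i, a i) * ∏ i, b i))
    * hsign

end SquareZero

namespace ExteriorAlgebra

variable {R M : Type*} [CommRing R] [AddCommGroup M] [Module R M]

theorem ι_mul_ι_eq_neg (x y : M) : ι R x * ι R y = -(ι R y * ι R x) :=
  eq_neg_of_add_eq_zero_left (ι_add_mul_swap x y)

theorem commute_ι_mul_ι_ι (x y z : M) : Commute (ι R x * ι R y) (ι R z) := by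
  calc ι R x * ι R y * ι R z = -(ι R x * ι R z * ι R y) := by
        rw [mul_assoc, ι_mul_ι_eq_neg y, mul_neg, mul_assoc]
    _ = ι R z * (ι R x * ι R y) := by rw [ι_mul_ι_eq_neg x, neg_mul, neg_neg, mul_assoc]

theorem commute_ι_mul_ι (x y z w : M) : Commute (ι R x * ι R y) (ι R z * ι R w) :=
  (commute_ι_mul_ι_ι x y z).mul_right (commute_ι_mul_ι_ι x y w)

theorem ι_mul_ι_sq (x y : M) : (ι R x * ι R y) ^ 2 = 0 := by
  rw [sq, ← mul_assoc, (commute_ι_mul_ι_ι x y x).eq, ← mul_assoc, ι_sq_zero, zero_mul, zero_mul]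

theorem ι_mul_ι_mul_ι_mul_ι_swap (x y z w : M) :
    ι R x * ι R y * (ι R z * ι R w) = -(ι R x * ι R z * (ι R y * ι R w)) := by
  rw [mul_assoc, ← mul_assoc (ι R y), ι_mul_ι_eq_neg y]
  simp only [neg_mul, mul_neg, mul_assoc]

variable (R M) in
def twoBlades : Set (ExteriorAlgebra R M) := Set.range fun p : M × M => ι R p.1 * ι R p.2

instance : IsMulCommutative (Algebra.adjoin R (twoBlades R M)) :=
  Algebra.isMulCommutative_adjoin R <| by
    rintro _ ⟨⟨x, y⟩, rfl⟩ _ ⟨⟨z, w⟩, rfl⟩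
    exact (commute_ι_mul_ι x y z w).eq

open scoped IsMulCommutative in
theorem sum_ι_mul_ι_add_ι_mul_ι_pow {κ : Type*} [Fintype κ] (u u' w w' : κ → M) :
    (∑ i, (ι R (u i) * ι R (u' i) + ι R (w i) * ι R (w' i))) ^ (2 * Fintype.card κ) =
      ((-1) ^ Fintype.card κ * (2 * Fintype.card κ).choose (Fintype.card κ) : R) •
        ((∑ i, ι R (u i) * ι R (w i)) ^ Fintype.card κ *
          (∑ i, ι R (u' i) * ι R (w' i)) ^ Fintype.card κ) := by
  let blade (x y : M) : Algebra.adjoin R (twoBlades R M) :=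
    ⟨ι R x * ι R y, Algebra.subset_adjoin ⟨(x, y), rfl⟩⟩
  have key := sum_add_pow_two_mul_card_eq
    (fun i => blade (u i) (u' i)) (fun i => blade (w i) (w' i))
    (fun i => blade (u i) (w i)) (fun i => blade (u' i) (w' i))
    (fun _ => Subtype.ext (ι_mul_ι_sq _ _)) (fun _ => Subtype.ext (ι_mul_ι_sq _ _))
    (fun _ => Subtype.ext (ι_mul_ι_sq _ _)) (fun _ => Subtype.ext (ι_mul_ι_sq _ _))
    (fun _ => Subtype.ext (ι_mul_ι_mul_ι_mul_ι_swap _ _ _ _))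
  have := congrArg Subtype.val key
  push_cast at this
  simpa [blade, Algebra.smul_def] using this

end ExteriorAlgebra

theorem Matrix.sum_smul_mul_sum_smul_of_mul_transpose_eq_one {R A κ : Type*} [CommSemiring R]
    [Semiring A] [Algebra R A] [Fintype κ] [DecidableEq κ] {P Q : Matrix κ κ R}
    (h : P * Qᵀ = 1) (x y : κ → A) :
    ∑ j, (∑ i, P i j • x i) * (∑ k, Q k j • y k) = ∑ i, x i * y i := by
  calc ∑ j, (∑ i, P i j • x i) * (∑ k, Q k j • y k)
      = ∑ i, ∑ k, (P * Qᵀ) i k • (x i * y k) := by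
        simp only [sum_mul_sum, smul_mul_smul_comm, mul_apply, transpose_apply, sum_smul]
        exact sum_comm.trans (sum_congr rfl fun i _ => sum_comm)
    _ = ∑ i, x i * y i := by simp [h, one_apply, ite_smul]

theorem stmt16 (n : ℕ) :
    ∃ c : ℂ, c ≠ 0 ∧ ∀ (Z : Matrix (Fin n) (Fin n) ℂ),
      Z.IsSymm → (Z.map Complex.im).PosDef →
      (let A : Matrix (Fin n) (Fin n) ℂ := (Z.map Complex.im).map (fun x => (x : ℂ))
       let Cm : Matrix (Fin n) (Fin n) ℂ := A⁻¹
       let ι : (Fin 4 × Fin n → ℂ) →ₗ[ℂ] ExteriorAlgebra ℂ (Fin 4 × Fin n → ℂ) :=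
         ExteriorAlgebra.ι ℂ
       let dz : Fin n → ExteriorAlgebra ℂ (Fin 4 × Fin n → ℂ) :=
         fun i => ι (Pi.single ((0 : Fin 4), i) 1)
       let dzb : Fin n → ExteriorAlgebra ℂ (Fin 4 × Fin n → ℂ) :=
         fun i => ι (Pi.single ((1 : Fin 4), i) 1)
       let dy : Fin n → ExteriorAlgebra ℂ (Fin 4 × Fin n → ℂ) :=
         fun i => ι (Pi.single ((2 : Fin 4), i) 1)
       let dyb : Fin n → ExteriorAlgebra ℂ (Fin 4 × Fin n → ℂ) :=
         fun i => ι (Pi.single ((3 : Fin 4), i) 1)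
       let ωSF := Complex.I • ∑ i, ∑ j, Cm i j • (dz i * dzb j)
       let fω := Complex.I • ∑ i, ∑ j, A i j • (dy i * dyb j)
       let Θ := ∑ i, dz i * dy i
       let Θb := ∑ i, dzb i * dyb i
       (ωSF + fω) ^ (2 * n) = c • (Θ ^ n * Θb ^ n)) := by
  refine ⟨(2 * n).choose n, Nat.cast_ne_zero.2 (Nat.choose_pos (by omega)).ne', ?_⟩
  intro Z hsym hpos A Cm ι dz dzb dy dyb ωSF fω Θ Θb
  have hA : IsUnit A := hpos.isUnit.map (Complex.ofRealHom.mapMatrix)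
  have hCA : Cm * Aᵀ = 1 := by
    rw [(hsym.map Complex.im).map _, nonsing_inv_mul A ((isUnit_iff_isUnit_det A).mp hA)]
  have key := ExteriorAlgebra.sum_ι_mul_ι_add_ι_mul_ι_pow (R := ℂ)
    (fun j => ∑ i, Cm i j • Pi.single ((0 : Fin 4), i) 1) (fun j => Pi.single ((1 : Fin 4), j) 1)
    (fun j => ∑ k, A k j • Pi.single ((2 : Fin 4), k) 1) (fun j => Pi.single ((3 : Fin 4), j) 1)
  simp only [map_sum, map_smul, Fintype.card_fin] at key
  rw [sum_smul_mul_sum_smul_of_mul_transpose_eq_one hCA] at key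
  have hω : ωSF + fω =
      Complex.I • ∑ j, ((∑ i, Cm i j • dz i) * dzb j + (∑ k, A k j • dy k) * dyb j) := by
    simp only [ωSF, fω, ← smul_add, sum_mul, smul_mul_assoc, sum_add_distrib]
    congr 2 <;> exact sum_comm
  rw [hω, smul_pow, key, smul_smul]
  congr 1
  rw [pow_mul, Complex.I_sq, ← mul_assoc, ← mul_pow, neg_one_mul, neg_neg, one_pow, one_mul]
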